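/- arXiv:1703.02648 — 7 statements merged into one kernel-verified Lean document; each statement's English description precedes it below -/
import Mathlib

section
/- Let f : ℝⁿ → ℝ be convex, let ε ≥ 0, λ ≥ 0, let x, y ∈ ℝⁿ, let v ∈ ∂_ε f(x), set z = x − λv, and let w ∈ ∂f(z). Then ‖z − y‖² ≤ ‖x − y‖² − 2λ(f(z) − f(y)) + λ(λ‖v‖² + 2ε − 2λ⟨w, v⟩). -/
open scoped RealInnerProductSpace

/-!
Add the `ε`-subgradient inequality for `v` at `x`, tested at `y`, to the subgradient
inequality for `w` at `z`, tested at `x`: this bounds `f z - f y` by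
`⟪v, x - y⟫ + ε - λ⟪w, v⟫`. Multiplying by `2λ ≥ 0` and inserting it into the expansion
`‖z - y‖² = ‖x - y‖² - 2λ⟪v, x - y⟫ + λ²‖v‖²` gives the claim.
-/

section

variable {E : Type*} [NormedAddCommGroup E] [InnerProductSpace ℝ E]

theorem sub_le_inner_of_epsSubgradient_of_subgradient {f : E → ℝ} {ε : ℝ} {x y z v w : E}
    (hv : ∀ u, f u ≥ f x + ⟪v, u - x⟫ - ε) (hw : ∀ u, f u ≥ f z + ⟪w, u - z⟫) :
    f z - f y ≤ ⟪v, x - y⟫ + ε - ⟪w, x - z⟫ := by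
  have hvy := hv y
  have hwx := hw x
  have hflip : ⟪v, y - x⟫ = -⟪v, x - y⟫ := by
    rw [← inner_neg_right, neg_sub]
  linarith

theorem norm_sub_smul_sub_sq (x y v : E) (lam : ℝ) :
    ‖x - lam • v - y‖ ^ 2 = ‖x - y‖ ^ 2 - 2 * lam * ⟪v, x - y⟫ + lam ^ 2 * ‖v‖ ^ 2 := by
  rw [sub_right_comm, norm_sub_sq_real, real_inner_smul_right, norm_smul, mul_pow,
    Real.norm_eq_abs, sq_abs, real_inner_comm]
  ring

end

theorem epsilon_subgradient_step_at_new_point_general {n : ℕ}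
    (f : EuclideanSpace ℝ (Fin n) → ℝ)
    (ε lam : ℝ) (hlam : 0 ≤ lam)
    (x y v : EuclideanSpace ℝ (Fin n))
    (hv : ∀ u, f u ≥ f x + inner ℝ v (u - x) - ε)
    (z : EuclideanSpace ℝ (Fin n)) (hz : z = x - lam • v)
    (w : EuclideanSpace ℝ (Fin n))
    (hw : ∀ u, f u ≥ f z + inner ℝ w (u - z)) :
    ‖z - y‖ ^ 2
      ≤ ‖x - y‖ ^ 2 - 2 * lam * (f z - f y)
        + lam * (lam * ‖v‖ ^ 2 + 2 * ε - 2 * lam * inner ℝ w v) := by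
  have hgap := sub_le_inner_of_epsSubgradient_of_subgradient (y := y) hv hw
  rw [hz, sub_sub_cancel, real_inner_smul_right, ← hz] at hgap
  rw [hz, norm_sub_smul_sub_sq, ← hz]
  nlinarith [mul_le_mul_of_nonneg_left hgap hlam]

/-- ε-subgradient step inequality with the function value evaluated at the new
point `z = x - λ • v`, where `w ∈ ∂f(z)`. -/
theorem epsilon_subgradient_step_at_new_point {n : ℕ}
    (f : EuclideanSpace ℝ (Fin n) → ℝ) (hf : ConvexOn ℝ Set.univ f)
    (ε lam : ℝ) (hε : 0 ≤ ε) (hlam : 0 ≤ lam)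
    (x y v : EuclideanSpace ℝ (Fin n))
    (hv : ∀ u, f u ≥ f x + inner ℝ v (u - x) - ε)
    (z : EuclideanSpace ℝ (Fin n)) (hz : z = x - lam • v)
    (w : EuclideanSpace ℝ (Fin n))
    (hw : ∀ u, f u ≥ f z + inner ℝ w (u - z)) :
    ‖z - y‖ ^ 2
      ≤ ‖x - y‖ ^ 2 - 2 * lam * (f z - f y)
        + lam * (lam * ‖v‖ ^ 2 + 2 * ε - 2 * lam * inner ℝ w v) :=
  epsilon_subgradient_step_at_new_point_general f ε lam hlam x y v hv z hz w hw
end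

section
/- Let f : ℝⁿ → ℝ be convex, let λ > 0 and γ > 0, let ϱ(λ) ∈ ℝ, and let O : ℝ × ℝⁿ → ℝⁿ be a map such that for all x, y ∈ ℝⁿ: ‖O(λ, x) − y‖² ≤ ‖x − y‖² − 2λ(f(x) − f(y)) + λϱ(λ), and ‖O(λ, x) − x‖ ≤ λγ. Then for all x, y ∈ ℝⁿ and every subgradient w ∈ ∂f(O(λ, x)), one has ‖O(λ, x) − y‖² ≤ ‖x − y‖² − 2λ(f(O(λ, x)) − f(y)) + λ(ϱ(λ) + 2λγ‖w‖). -/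
theorem le_add_norm_mul_of_subgradient {E : Type*} [NormedAddCommGroup E]
    [InnerProductSpace ℝ E] {f : E → ℝ} {w x z : E} {r : ℝ}
    (hw : ∀ u, f z + inner ℝ w (u - z) ≤ f u) (hxz : ‖x - z‖ ≤ r) :
    f z ≤ f x + ‖w‖ * r := by
  have hinner : -(‖w‖ * r) ≤ inner ℝ w (x - z) :=
    calc -(‖w‖ * r) ≤ -(‖w‖ * ‖x - z‖) := by gcongr
      _ ≤ inner ℝ w (x - z) := neg_le_of_abs_le (abs_real_inner_le_norm w (x - z))
  linarith [hw x]

theorem optimality_operator_value_at_image_general {n : ℕ}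
    (f : EuclideanSpace ℝ (Fin n) → ℝ)
    (lam γ : ℝ) (hlam : 0 < lam) (ϱ : ℝ)
    (O : ℝ → EuclideanSpace ℝ (Fin n) → EuclideanSpace ℝ (Fin n))
    (h1 : ∀ x y, ‖O lam x - y‖ ^ 2
        ≤ ‖x - y‖ ^ 2 - 2 * lam * (f x - f y) + lam * ϱ)
    (h2 : ∀ x, ‖O lam x - x‖ ≤ lam * γ) :
    ∀ x y w, (∀ u, f u ≥ f (O lam x) + inner ℝ w (u - O lam x)) →
      ‖O lam x - y‖ ^ 2
        ≤ ‖x - y‖ ^ 2 - 2 * lam * (f (O lam x) - f y)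
          + lam * (ϱ + 2 * lam * γ * ‖w‖) := by
  intro x y w hw
  have hvalue : f (O lam x) ≤ f x + ‖w‖ * (lam * γ) :=
    le_add_norm_mul_of_subgradient hw (by rw [norm_sub_rev]; exact h2 x)
  have hscaled := mul_le_mul_of_nonneg_left hvalue hlam.le
  linarith [h1 x y]

/-- If an operator `O` satisfies a descent inequality with the function value
at the starting point and a boundedness estimate, then it satisfies the
descent inequality with the function value at the resulting point, with an
extra error term `2λγ‖w‖` for any subgradient `w` of `f` at `O(λ, x)`. -/
theorem optimality_operator_value_at_image {n : ℕ}
    (f : EuclideanSpace ℝ (Fin n) → ℝ) (hf : ConvexOn ℝ Set.univ f)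
    (lam γ : ℝ) (hlam : 0 < lam) (hγ : 0 < γ) (ϱ : ℝ)
    (O : ℝ → EuclideanSpace ℝ (Fin n) → EuclideanSpace ℝ (Fin n))
    (h1 : ∀ x y, ‖O lam x - y‖ ^ 2
        ≤ ‖x - y‖ ^ 2 - 2 * lam * (f x - f y) + lam * ϱ)
    (h2 : ∀ x, ‖O lam x - x‖ ≤ lam * γ) :
    ∀ x y w, (∀ u, f u ≥ f (O lam x) + inner ℝ w (u - O lam x)) →
      ‖O lam x - y‖ ^ 2
        ≤ ‖x - y‖ ^ 2 - 2 * lam * (f (O lam x) - f y)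
          + lam * (ϱ + 2 * lam * γ * ‖w‖) :=
  optimality_operator_value_at_image_general f lam γ hlam ϱ O h1 h2
end

section
/- Let f¹, …, fᵐ : ℝⁿ → ℝ be convex functions such that every subgradient of fⁱ at any point has norm at most C_i, and set f = Σ_{i=1}^m fⁱ. Let λ ≥ 0, x ∈ ℝⁿ, and let z be the output of an incremental subgradient pass from x with stepsize λ. Then for every y ∈ ℝⁿ: ‖z − y‖² ≤ ‖x − y‖² − 2λ(f(x) − f(y)) + λ²(Σ_{i=1}^m C_i)². -/
open Filter Topology

/-- `v` is a subgradient of `f` at `x`. -/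
def IsSubgrad {n : ℕ} (f : EuclideanSpace ℝ (Fin n) → ℝ)
    (v x : EuclideanSpace ℝ (Fin n)) : Prop :=
  ∀ y, f y ≥ f x + inner ℝ v (y - x)

/-- `z` is the output of an incremental subgradient pass for `f 0, …, f (m-1)`
starting at `x` with stepsize `lam`. -/
def IsIncPass {n m : ℕ} (f : Fin m → (EuclideanSpace ℝ (Fin n) → ℝ))
    (lam : ℝ) (x z : EuclideanSpace ℝ (Fin n)) : Prop :=
  ∃ w : Fin (m + 1) → EuclideanSpace ℝ (Fin n),
    w 0 = x ∧ w (Fin.last m) = z ∧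
    ∀ i : Fin m, ∃ v, IsSubgrad (f i) v (w i.castSucc) ∧
      w i.succ = w i.castSucc - lam • v

/-!
A subgradient step `w ↦ w - λ v` with `v ∈ ∂g(w)` satisfies
`‖w - λv - y‖² ≤ ‖w - y‖² - 2λ (g w - g y) + λ² ‖v‖²`, because `g w - g y ≤ ⟪v, w - y⟫`.
Induct on `m`, peeling off the first component: the rest of the pass starts at
`x₁ = x - λ v₀` with `‖x - x₁‖ ≤ λ C₀`. A finite convex function has a subgradient at
every point (a supporting hyperplane of its epigraph), so the bound on subgradients gives
`fⁱ x - fⁱ x₁ ≤ Cᵢ ‖x - x₁‖`; the resulting cross terms `2λ² C₀ ∑_{i ≥ 1} Cᵢ` complete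
`λ² C₀² + λ² (∑_{i ≥ 1} Cᵢ)²` to `λ² (∑ Cᵢ)²`.
-/

theorem ConvexOn.exists_supporting_clm {E : Type*} [TopologicalSpace E] [AddCommGroup E]
    [IsTopologicalAddGroup E] [Module ℝ E] [ContinuousSMul ℝ E] {f : E → ℝ}
    (hf : ConvexOn ℝ Set.univ f) (hfc : Continuous f) (x : E) :
    ∃ φ : StrongDual ℝ E, ∀ y, f x + φ (y - x) ≤ f y := by
  set S : Set (E × ℝ) := {p | f p.1 < p.2}
  have hS_convex : Convex ℝ S := by
    have hfst : ConvexOn ℝ Set.univ fun p : E × ℝ => f p.1 := hf.comp_linearMap (.fst ℝ E ℝ)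
    simpa using (hfst.sub ((LinearMap.snd ℝ E ℝ).concaveOn convex_univ)).convex_lt 0
  have hS_open : IsOpen S := isOpen_lt (hfc.comp continuous_fst) continuous_snd
  obtain ⟨L, hL⟩ := geometric_hahn_banach_open_point hS_convex hS_open
    (show (x, f x) ∉ S by simp [S])
  set φ := L.comp (ContinuousLinearMap.inl ℝ E ℝ)
  set c := L (0, 1)
  have hL_apply (p : E) (t : ℝ) : L (p, t) = φ p + t * c := by
    rw [← L.comp_inl_add_comp_inr]
    congr 1
    rw [← smul_eq_mul, ← L.map_smul]
    simp
  have hsep (p : E) (t : ℝ) (ht : f p < t) : φ p + t * c < φ x + f x * c := by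
    simpa only [hL_apply] using hL (p, t) ht
  have hc : c < 0 := by linarith [hsep x (f x + 1) (by linarith)]
  refine ⟨(-c)⁻¹ • φ, fun y => le_of_forall_gt_imp_ge_of_dense fun t ht => ?_⟩
  have : (-c)⁻¹ * (φ y - φ x) < t - f x := by
    rw [inv_mul_lt_iff₀ (by linarith)]
    linarith [hsep y t ht]
  show f x + (-c)⁻¹ * φ (y - x) ≤ t
  rw [map_sub]
  linarith

section Subgradient

variable {n : ℕ} {g : EuclideanSpace ℝ (Fin n) → ℝ}

theorem ConvexOn.exists_isSubgrad (hg : ConvexOn ℝ Set.univ g) (x : EuclideanSpace ℝ (Fin n)) :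
    ∃ v, IsSubgrad g v x := by
  obtain ⟨φ, hφ⟩ :=
    hg.exists_supporting_clm (continuousOn_univ.mp (hg.continuousOn isOpen_univ)) x
  refine ⟨(InnerProductSpace.toDual ℝ _).symm φ, fun y => ?_⟩
  rw [InnerProductSpace.toDual_symm_apply]
  exact hφ y

theorem IsSubgrad.sub_le_inner {v w : EuclideanSpace ℝ (Fin n)} (hv : IsSubgrad g v w)
    (y : EuclideanSpace ℝ (Fin n)) : g w - g y ≤ inner ℝ v (w - y) := by
  have hflip : inner ℝ v (y - w) = -inner ℝ v (w - y) := by rw [← inner_neg_right, neg_sub]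
  linarith [hv y]

theorem IsSubgrad.norm_sub_smul_sub_sq_le {v w : EuclideanSpace ℝ (Fin n)}
    (hv : IsSubgrad g v w) {lam : ℝ} (hlam : 0 ≤ lam) (y : EuclideanSpace ℝ (Fin n)) :
    ‖w - lam • v - y‖ ^ 2 ≤ ‖w - y‖ ^ 2 - 2 * lam * (g w - g y) + lam ^ 2 * ‖v‖ ^ 2 := by
  have hexpand : ‖w - lam • v - y‖ ^ 2
      = ‖w - y‖ ^ 2 - 2 * lam * inner ℝ v (w - y) + lam ^ 2 * ‖v‖ ^ 2 := by
    rw [sub_right_comm, norm_sub_sq_real, real_inner_smul_right, real_inner_comm, norm_smul,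
      Real.norm_eq_abs, mul_pow, sq_abs]
    ring
  rw [hexpand]
  linarith [mul_le_mul_of_nonneg_left (hv.sub_le_inner y) hlam]

variable {Cg : ℝ}

theorem ConvexOn.nonneg_of_isSubgrad_norm_le (hg : ConvexOn ℝ Set.univ g)
    (hC : ∀ z v, IsSubgrad g v z → ‖v‖ ≤ Cg) : 0 ≤ Cg := by
  obtain ⟨v, hv⟩ := hg.exists_isSubgrad 0
  exact (norm_nonneg v).trans (hC 0 v hv)

theorem ConvexOn.sub_le_mul_norm_sub_of_isSubgrad_norm_le (hg : ConvexOn ℝ Set.univ g)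
    (hC : ∀ z v, IsSubgrad g v z → ‖v‖ ≤ Cg) (a b : EuclideanSpace ℝ (Fin n)) :
    g a - g b ≤ Cg * ‖a - b‖ := by
  obtain ⟨v, hv⟩ := hg.exists_isSubgrad a
  calc g a - g b ≤ inner ℝ v (a - b) := hv.sub_le_inner b
    _ ≤ ‖v‖ * ‖a - b‖ := real_inner_le_norm v (a - b)
    _ ≤ Cg * ‖a - b‖ := by gcongr; exact hC a v hv

end Subgradient

section IncPass

variable {n m : ℕ} {lam : ℝ} {x z : EuclideanSpace ℝ (Fin n)}

theorem IsIncPass.eq_of_zero {f : Fin 0 → EuclideanSpace ℝ (Fin n) → ℝ}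
    (h : IsIncPass f lam x z) : z = x := by
  obtain ⟨w, hw₀, hw_last, -⟩ := h
  rw [← hw₀, ← hw_last]
  rfl

theorem IsIncPass.exists_first_step {f : Fin (m + 1) → EuclideanSpace ℝ (Fin n) → ℝ}
    (h : IsIncPass f lam x z) :
    ∃ v, IsSubgrad (f 0) v x ∧ IsIncPass (fun i => f i.succ) lam (x - lam • v) z := by
  obtain ⟨w, hw₀, hw_last, hstep⟩ := h
  obtain ⟨v, hv, hw₁⟩ := hstep 0
  refine ⟨v, hw₀ ▸ hv, fun i => w i.succ, ?_, hw_last, fun i => hstep i.succ⟩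
  rw [← hw₀]
  exact hw₁

end IncPass

/-- The basic incremental subgradient inequality (Nedić–Bertsekas), with the
function value at the starting point. -/
theorem incremental_subgradient_inequality {n m : ℕ}
    (f : Fin m → (EuclideanSpace ℝ (Fin n) → ℝ))
    (hfconv : ∀ i, ConvexOn ℝ Set.univ (f i))
    (C : Fin m → ℝ) (hC : ∀ i, ∀ z v, IsSubgrad (f i) v z → ‖v‖ ≤ C i)
    (lam : ℝ) (hlam : 0 ≤ lam)
    (x z : EuclideanSpace ℝ (Fin n)) (hpass : IsIncPass f lam x z)
    (y : EuclideanSpace ℝ (Fin n)) :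
    ‖z - y‖ ^ 2 ≤ ‖x - y‖ ^ 2 - 2 * lam * ((∑ i, f i x) - ∑ i, f i y)
      + lam ^ 2 * (∑ i, C i) ^ 2 := by
  induction m generalizing x z with
  | zero => simp [hpass.eq_of_zero]
  | succ m ih =>
    obtain ⟨v, hv, hrest⟩ := hpass.exists_first_step
    have hv_le : ‖v‖ ≤ C 0 := hC 0 x v hv
    have hfirst := hv.norm_sub_smul_sub_sq_le hlam y
    have hlast := ih (fun i => f i.succ) (fun i => hfconv i.succ) (fun i => C i.succ)
      (fun i => hC i.succ) _ z hrest
    have hstep_norm : ‖x - (x - lam • v)‖ ≤ lam * C 0 := by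
      rw [sub_sub_cancel, norm_smul, Real.norm_of_nonneg hlam]
      gcongr
    have hdrift : ∑ i : Fin m, (f i.succ x - f i.succ (x - lam • v))
        ≤ (∑ i : Fin m, C i.succ) * (lam * C 0) := by
      rw [Finset.sum_mul]
      refine Finset.sum_le_sum fun i _ => ?_
      have hCi := (hfconv i.succ).nonneg_of_isSubgrad_norm_le (hC i.succ)
      exact ((hfconv i.succ).sub_le_mul_norm_sub_of_isSubgrad_norm_le (hC i.succ) _ _).trans
        (by gcongr)
    have hv_sq : lam ^ 2 * ‖v‖ ^ 2 ≤ lam ^ 2 * C 0 ^ 2 := by gcongr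
    rw [Finset.sum_sub_distrib] at hdrift
    simp only [Fin.sum_univ_succ]
    linarith [mul_le_mul_of_nonneg_left hdrift hlam]
end

section
/- (Iterated operator lemma.) Let f : ℝⁿ → ℝ be convex with every subgradient at every point of norm at most M > 0. Let γ > 0, let ρ : ℝ → ℝ, and let O : ℝ × ℝⁿ → ℝⁿ satisfy, for all λ ≥ 0 and all x, y ∈ ℝⁿ: ‖O(λ, x) − y‖² ≤ ‖x − y‖² − 2λ(f(O(λ, x)) − f(y)) + λρ(λ), and ‖O(λ, x) − x‖ ≤ λγ. Fix λ > 0 and J ≥ 1, and define x⁽⁰⁾ = x and x⁽ⁱ⁾ = O(λ/i, x⁽ⁱ⁻¹⁾) for i = 1, …, J. Then: (a) ‖x⁽ʲ⁾ − x⁽ˡ⁾‖ ≤ λγ Σ_{i=j+1}^{l} 1/i for all 0 ≤ j ≤ l ≤ J (so in particular ‖x⁽ᴶ⁾ − x‖ ≤ λγ Σ_{i=1}^{J} 1/i); and (b) for every y ∈ ℝⁿ: ‖x⁽ᴶ⁾ − y‖² ≤ ‖x − y‖² − 2λ(Σ_{i=1}^{J} 1/i)(f(x⁽ᴶ⁾)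 − f(y)) + λ[Σ_{i=1}^{J} (1/i)ρ(λ/i) + 2λγM Σ_{i=1}^{J} (1/i) Σ_{j=i+1}^{J} (1/j)]. -/
/-! Part (a) is the triangle inequality along the iterates, the `i`-th step moving by at most
`(λ / i) γ`. For (b), the defining inequality of `O` at the steps `λ / i` telescopes; the values
`f (x⁽ⁱ⁾)` it produces are traded for `f (x⁽ᴶ⁾)` at the price `M ‖x⁽ⁱ⁾ - x⁽ᴶ⁾‖`, which (a)
bounds by `λ γ M ∑_{j > i} 1 / j`. This uses a subgradient at `x⁽ᴶ⁾`, which exists because a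
continuous convex function can be separated from its open strict epigraph (Hahn–Banach). -/

open Finset in
theorem le_add_sum_Icc_of_le_add_succ {α : Type*} [AddCommMonoid α] [PartialOrder α]
    [IsOrderedAddMonoid α] {a b : ℕ → α} {j l : ℕ} (hjl : j ≤ l)
    (h : ∀ i, j ≤ i → i < l → a (i + 1) ≤ a i + b (i + 1)) :
    a l ≤ a j + ∑ i ∈ Icc (j + 1) l, b i := by
  induction l, hjl using Nat.le_induction with
  | base => simp
  | succ l hjl ih =>
    rw [sum_Icc_succ_top (by omega), ← add_assoc]
    exact (h l hjl l.lt_succ_self).trans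
      (add_le_add_left (ih fun i hji hil => h i hji (by omega)) _)

theorem norm_sub_le_sum_Icc_of_norm_succ_sub_le {E : Type*} [SeminormedAddCommGroup E]
    {w : ℕ → E} {c : ℕ → ℝ} {j l : ℕ} (hjl : j ≤ l)
    (h : ∀ i, j ≤ i → i < l → ‖w (i + 1) - w i‖ ≤ c (i + 1)) :
    ‖w j - w l‖ ≤ ∑ i ∈ Finset.Icc (j + 1) l, c i := by
  simpa using le_add_sum_Icc_of_le_add_succ (a := fun k => ‖w j - w k‖) hjl fun i hji hil =>
    (norm_sub_le_norm_sub_add_norm_sub _ (w i) _).trans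
      (add_le_add_right ((norm_sub_rev _ _).trans_le (h i hji hil)) _)

theorem ConvexOn.exists_strongDual_add_le {E : Type*} [TopologicalSpace E] [AddCommGroup E]
    [IsTopologicalAddGroup E] [Module ℝ E] [ContinuousSMul ℝ E] {f : E → ℝ}
    (hf : ConvexOn ℝ Set.univ f) (hcont : Continuous f) (z : E) :
    ∃ g : StrongDual ℝ E, ∀ u, f z + g (u - z) ≤ f u := by
  obtain ⟨φ, hφ⟩ := geometric_hahn_banach_point_open (x := (z, f z)) hf.convex_strict_epigraph
    (by simpa using isOpen_lt (hcont.comp continuous_fst) continuous_snd) (by simp)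
  have hsplit : ∀ u t, φ (u, t) = φ (u, 0) + t * φ (0, 1) := fun u t => by
    rw [← smul_eq_mul, ← map_smul, ← map_add]; simp
  have hc : 0 < φ (0, 1) := by
    have := hφ (z, f z + 1) (by simp)
    rw [hsplit z (f z + 1), hsplit z (f z)] at this
    linarith
  refine ⟨-(φ (0, 1))⁻¹ • φ.comp (.inl ℝ E ℝ), fun u => le_of_forall_gt fun t ht => ?_⟩
  have hsep := hφ (u, t) (by simpa using ht)
  rw [hsplit u t, hsplit z (f z)] at hsep
  have hinl : φ (u - z, 0) = φ (u, 0) - φ (z, 0) := by rw [← map_sub]; simp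
  have hlt : f z - t < (φ (0, 1))⁻¹ * φ (u - z, 0) := by
    rw [lt_inv_mul_iff₀ hc, hinl]; linarith
  simp only [smul_apply, ContinuousLinearMap.comp_apply,
    ContinuousLinearMap.inl_apply, smul_eq_mul]
  linarith

theorem ConvexOn.exists_inner_add_le {E : Type*} [NormedAddCommGroup E] [InnerProductSpace ℝ E]
    [CompleteSpace E] {f : E → ℝ} (hf : ConvexOn ℝ Set.univ f) (hcont : Continuous f) (z : E) :
    ∃ v : E, ∀ u, f z + inner ℝ v (u - z) ≤ f u := by
  obtain ⟨g, hg⟩ := hf.exists_strongDual_add_le hcont z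
  refine ⟨(InnerProductSpace.toDual ℝ E).symm g, fun u => ?_⟩
  rw [InnerProductSpace.toDual_symm_apply]
  exact hg u

theorem ConvexOn.le_add_mul_of_norm_sub_le {E : Type*} [NormedAddCommGroup E]
    [InnerProductSpace ℝ E] [CompleteSpace E] {f : E → ℝ} (hf : ConvexOn ℝ Set.univ f)
    (hcont : Continuous f) {M : ℝ}
    (hsub : ∀ z v, (∀ u, f u ≥ f z + inner ℝ v (u - z)) → ‖v‖ ≤ M)
    {z u : E} {r : ℝ} (hr : ‖z - u‖ ≤ r) : f z ≤ f u + M * r := by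
  obtain ⟨v, hv⟩ := hf.exists_inner_add_le hcont z
  have hvM : ‖v‖ ≤ M := hsub z v hv
  have hinner : -inner ℝ v (u - z) ≤ M * r := by
    rw [← inner_neg_right, neg_sub]
    exact (real_inner_le_norm v _).trans
      (mul_le_mul hvM hr (norm_nonneg _) ((norm_nonneg v).trans hvM))
  linarith [hv u]

theorem iterated_operator_lemma_general {n : ℕ}
    (f : EuclideanSpace ℝ (Fin n) → ℝ) (hf : ConvexOn ℝ Set.univ f)
    (M : ℝ)
    (hsub : ∀ z v, (∀ u, f u ≥ f z + inner ℝ v (u - z)) → ‖v‖ ≤ M)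
    (γ : ℝ) (ρ : ℝ → ℝ)
    (O : ℝ → EuclideanSpace ℝ (Fin n) → EuclideanSpace ℝ (Fin n))
    (hO1 : ∀ lam ≥ (0 : ℝ), ∀ x y, ‖O lam x - y‖ ^ 2
        ≤ ‖x - y‖ ^ 2 - 2 * lam * (f (O lam x) - f y) + lam * ρ lam)
    (hO2 : ∀ lam ≥ (0 : ℝ), ∀ x, ‖O lam x - x‖ ≤ lam * γ)
    (lam : ℝ) (hlam : 0 < lam) (J : ℕ)
    (x : EuclideanSpace ℝ (Fin n))
    (w : ℕ → EuclideanSpace ℝ (Fin n)) (hw0 : w 0 = x)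
    (hwrec : ∀ i, 1 ≤ i → i ≤ J → w i = O (lam / (i : ℝ)) (w (i - 1))) :
    (∀ j l, j ≤ l → l ≤ J →
      ‖w j - w l‖ ≤ lam * γ * ∑ i ∈ Finset.Icc (j + 1) l, (1 : ℝ) / (i : ℝ)) ∧
    (∀ y, ‖w J - y‖ ^ 2
        ≤ ‖x - y‖ ^ 2
          - 2 * lam * (∑ i ∈ Finset.Icc 1 J, (1 : ℝ) / (i : ℝ)) * (f (w J) - f y)
          + lam * ((∑ i ∈ Finset.Icc 1 J, (1 / (i : ℝ)) * ρ (lam / (i : ℝ)))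
            + 2 * lam * γ * M *
              ∑ i ∈ Finset.Icc 1 J, (1 / (i : ℝ)) *
                ∑ j ∈ Finset.Icc (i + 1) J, (1 : ℝ) / (j : ℝ))) := by
  have hrec : ∀ i < J, w (i + 1) = O (lam / ((i + 1 : ℕ) : ℝ)) (w i) := fun i hi => by
    simpa using hwrec (i + 1) (by omega) hi
  have hstep_nonneg : ∀ i : ℕ, 0 ≤ lam / ((i + 1 : ℕ) : ℝ) := fun i => by positivity
  have hdist : ∀ j l, j ≤ l → l ≤ J →
      ‖w j - w l‖ ≤ lam * γ * ∑ i ∈ Finset.Icc (j + 1) l, (1 : ℝ) / (i : ℝ) := by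
    intro j l hjl hlJ
    rw [Finset.mul_sum]
    refine norm_sub_le_sum_Icc_of_norm_succ_sub_le hjl fun i _ hil => ?_
    rw [hrec i (by omega)]
    exact (hO2 _ (hstep_nonneg i) _).trans_eq (by ring)
  refine ⟨hdist, fun y => ?_⟩
  set T : ℕ → ℝ := fun i => ∑ j ∈ Finset.Icc (i + 1) J, (1 : ℝ) / (j : ℝ)
  have hcont : Continuous f := continuousOn_univ.mp (hf.continuousOn isOpen_univ)
  have hdescent := le_add_sum_Icc_of_le_add_succ (a := fun k => ‖w k - y‖ ^ 2)
    (b := fun i => -(2 * lam * (1 / (i : ℝ)) * (f (w J) - f y))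
      + lam * ((1 / (i : ℝ)) * ρ (lam / (i : ℝ)) + 2 * lam * γ * M * ((1 / (i : ℝ)) * T i)))
    (Nat.zero_le J) fun i _ hiJ => by
      have hO := hO1 _ (hstep_nonneg i) (w i) y
      rw [← hrec i hiJ] at hO
      have hlip := hf.le_add_mul_of_norm_sub_le hcont hsub
        ((norm_sub_rev _ _).trans_le (hdist (i + 1) J hiJ le_rfl))
      have hlip' := mul_le_mul_of_nonneg_left hlip (hstep_nonneg i)
      linear_combination hO + 2 * hlip'
  rw [hw0] at hdescent
  refine hdescent.trans_eq ?_
  simp only [Finset.sum_add_distrib, Finset.sum_neg_distrib, ← Finset.mul_sum, ← Finset.sum_mul]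
  ring

/-- Iterated operator lemma: applying an optimality operator `J` times with
diminishing stepsizes `λ/i` yields an operator with the same two properties. -/
theorem iterated_operator_lemma {n : ℕ}
    (f : EuclideanSpace ℝ (Fin n) → ℝ) (hf : ConvexOn ℝ Set.univ f)
    (M : ℝ) (hM : 0 < M)
    (hsub : ∀ z v, (∀ u, f u ≥ f z + inner ℝ v (u - z)) → ‖v‖ ≤ M)
    (γ : ℝ) (hγ : 0 < γ) (ρ : ℝ → ℝ)
    (O : ℝ → EuclideanSpace ℝ (Fin n) → EuclideanSpace ℝ (Fin n))
    (hO1 : ∀ lam ≥ (0 : ℝ), ∀ x y, ‖O lam x - y‖ ^ 2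
        ≤ ‖x - y‖ ^ 2 - 2 * lam * (f (O lam x) - f y) + lam * ρ lam)
    (hO2 : ∀ lam ≥ (0 : ℝ), ∀ x, ‖O lam x - x‖ ≤ lam * γ)
    (lam : ℝ) (hlam : 0 < lam) (J : ℕ) (hJ : 1 ≤ J)
    (x : EuclideanSpace ℝ (Fin n))
    (w : ℕ → EuclideanSpace ℝ (Fin n)) (hw0 : w 0 = x)
    (hwrec : ∀ i, 1 ≤ i → i ≤ J → w i = O (lam / (i : ℝ)) (w (i - 1))) :
    (∀ j l, j ≤ l → l ≤ J →
      ‖w j - w l‖ ≤ lam * γ * ∑ i ∈ Finset.Icc (j + 1) l, (1 : ℝ) / (i : ℝ)) ∧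
    (∀ y, ‖w J - y‖ ^ 2
        ≤ ‖x - y‖ ^ 2
          - 2 * lam * (∑ i ∈ Finset.Icc 1 J, (1 : ℝ) / (i : ℝ)) * (f (w J) - f y)
          + lam * ((∑ i ∈ Finset.Icc 1 J, (1 / (i : ℝ)) * ρ (lam / (i : ℝ)))
            + 2 * lam * γ * M *
              ∑ i ∈ Finset.Icc 1 J, (1 / (i : ℝ)) *
                ∑ j ∈ Finset.Icc (i + 1) J, (1 : ℝ) / (j : ℝ))) :=
  iterated_operator_lemma_general f hf M hsub γ ρ O hO1 hO2 lam hlam J x w hw0 hwrec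
end

section
/- Let X₀ ⊆ ℝⁿ be nonempty, closed and convex, let f : ℝⁿ → ℝ be convex and differentiable with ∇f Lipschitz continuous with constant L > 0, and let 0 < λ ≤ 1/L. For x ∈ ℝⁿ define the projected gradient step G(λ, x) = P_{X₀}(x − λ∇f(x)). Then for every y ∈ X₀: 2λ(f(y) − f(G(λ, x))) ≥ ‖y − G(λ, x)‖² − ‖y − x‖². -/
/-! Three inequalities combine: the variational characterization of the projection
`x⁺ = P (x - λ g x)`, the gradient inequality of the convex `f` at `x`, and the descent lemma
`f x⁺ ≤ f x + ⟪g x, x⁺ - x⟫ + L/2 ‖x⁺ - x‖²` for the `L`-Lipschitz gradient. The condition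
`λ L ≤ 1` absorbs the quadratic remainder `‖x⁺ - x‖²`. -/

open Set RealInnerProductSpace AffineMap NNReal

theorem le_add_deriv_zero_add_half_of_deriv_sub_le {φ φ' : ℝ → ℝ} {C : ℝ}
    (hφ : ∀ t, HasDerivAt φ (φ' t) t) (hC : ∀ t ∈ Ico (0 : ℝ) 1, φ' t - φ' 0 ≤ C * t) :
    φ 1 ≤ φ 0 + φ' 0 + C / 2 := by
  set B : ℝ → ℝ := fun s => φ 0 + s * φ' 0 + C / 2 * s ^ 2
  have hB : ∀ t, HasDerivAt B (φ' 0 + C * t) t := by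
    intro t
    refine ((((hasDerivAt_id' t).mul_const (φ' 0)).const_add (φ 0)).add
      ((hasDerivAt_pow 2 t).const_mul (C / 2))).congr_deriv ?_
    push_cast
    ring
  have := image_le_of_deriv_right_le_deriv_boundary
    (fun t _ => (hφ t).continuousAt.continuousWithinAt) (fun t _ => (hφ t).hasDerivWithinAt)
    (B := B) (by simp [B])
    (fun t _ => (hB t).continuousAt.continuousWithinAt) (fun t _ => (hB t).hasDerivWithinAt)
    (fun t ht => by linarith [hC t ht]) (right_mem_Icc.2 zero_le_one)
  simpa [B] using this

section Gradient

variable {E : Type*} [NormedAddCommGroup E] [InnerProductSpace ℝ E] [CompleteSpace E]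
  {f : E → ℝ} {g : E → E}

theorem HasGradientAt.hasDerivAt_comp_lineMap {f' a b : E} {t : ℝ}
    (h : HasGradientAt f f' (lineMap a b t)) :
    HasDerivAt (f ∘ lineMap a b) ⟪f', b - a⟫ t := by
  simpa using h.hasFDerivAt.comp_hasDerivAt t hasDerivAt_lineMap

theorem le_add_inner_gradient_add_of_lipschitzWith {K : ℝ≥0}
    (hgrad : ∀ z, HasGradientAt f (g z) z) (hg : LipschitzWith K g) (a b : E) :
    f b ≤ f a + ⟪g a, b - a⟫ + K / 2 * ‖b - a‖ ^ 2 := by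
  have := le_add_deriv_zero_add_half_of_deriv_sub_le
    (fun t => (hgrad _).hasDerivAt_comp_lineMap) (C := K * ‖b - a‖ ^ 2) fun t ht =>
    calc ⟪g (lineMap a b t), b - a⟫ - ⟪g (lineMap a b (0 : ℝ)), b - a⟫
        = ⟪g (lineMap a b t) - g a, b - a⟫ := by rw [lineMap_apply_zero, inner_sub_left]
      _ ≤ ‖g (lineMap a b t) - g a‖ * ‖b - a‖ := real_inner_le_norm _ _
      _ ≤ K * ‖lineMap a b t - a‖ * ‖b - a‖ := by gcongr; exact hg.norm_sub_le _ _
      _ = K * ‖b - a‖ ^ 2 * t := by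
        rw [lineMap_apply_module', add_sub_cancel_right, norm_smul, Real.norm_of_nonneg ht.1]
        ring
  simpa [mul_div_right_comm] using this

theorem ConvexOn.add_inner_gradient_le (hf : ConvexOn ℝ univ f)
    (hgrad : ∀ z, HasGradientAt f (g z) z) (x y : E) :
    f x + ⟪g x, y - x⟫ ≤ f y := by
  have hline : ConvexOn ℝ univ (f ∘ lineMap x y) := hf.comp_affineMap (lineMap x y)
  have := hline.le_slope_of_hasDerivAt (mem_univ 0) (mem_univ 1) zero_lt_one
    (hgrad _).hasDerivAt_comp_lineMap
  simp only [Function.comp_apply, lineMap_apply_zero, lineMap_apply_one, slope_def_field,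
    sub_zero, div_one] at this
  linarith

end Gradient

theorem inner_sub_le_zero_of_forall_norm_sub_le {F : Type*} [NormedAddCommGroup F]
    [InnerProductSpace ℝ F] {K : Set F} (hK : Convex ℝ K) {z u : F} (hu : u ∈ K)
    (hmin : ∀ w ∈ K, ‖z - u‖ ≤ ‖z - w‖) {w : F} (hw : w ∈ K) : ⟪z - u, w - u⟫ ≤ 0 := by
  have : Nonempty K := ⟨⟨u, hu⟩⟩
  refine (norm_eq_iInf_iff_real_inner_le_zero hK hu).mp ?_ w hw
  have hbdd : BddBelow (range fun w : K => ‖z - w‖) :=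
    ⟨0, by rintro _ ⟨_, rfl⟩; exact norm_nonneg _⟩
  exact le_antisymm (le_ciInf fun w => hmin w w.2) (ciInf_le hbdd ⟨u, hu⟩)

theorem projected_gradient_step_inequality_general {n : ℕ}
    (X₀ : Set (EuclideanSpace ℝ (Fin n)))
    (hX₀cv : Convex ℝ X₀)
    (f : EuclideanSpace ℝ (Fin n) → ℝ) (hf : ConvexOn ℝ Set.univ f)
    (g : EuclideanSpace ℝ (Fin n) → EuclideanSpace ℝ (Fin n))
    (hgrad : ∀ z, HasGradientAt f (g z) z)
    (L : ℝ) (hL : 0 < L) (hLip : LipschitzWith (Real.toNNReal L) g)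
    (lam : ℝ) (hlam : 0 < lam) (hlamL : lam ≤ 1 / L)
    -- `P` is the Euclidean projection onto `X₀`
    (P : EuclideanSpace ℝ (Fin n) → EuclideanSpace ℝ (Fin n))
    (hPmem : ∀ z, P z ∈ X₀) (hPnear : ∀ z, ∀ w ∈ X₀, ‖z - P z‖ ≤ ‖z - w‖)
    (x : EuclideanSpace ℝ (Fin n)) (y : EuclideanSpace ℝ (Fin n)) (hy : y ∈ X₀) :
    2 * lam * (f y - f (P (x - lam • g x)))
      ≥ ‖y - P (x - lam • g x)‖ ^ 2 - ‖y - x‖ ^ 2 := by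
  set xp := P (x - lam • g x)
  have hdescent : f xp ≤ f x + ⟪g x, xp - x⟫ + L / 2 * ‖xp - x‖ ^ 2 := by
    simpa [Real.coe_toNNReal L hL.le] using
      le_add_inner_gradient_add_of_lipschitzWith hgrad hLip x xp
  have hconvex : f x + ⟪g x, y - x⟫ ≤ f y := hf.add_inner_gradient_le hgrad x y
  have hproj : ⟪x - xp, y - xp⟫ ≤ lam * ⟪g x, y - xp⟫ := by
    have := inner_sub_le_zero_of_forall_norm_sub_le hX₀cv (hPmem _) (hPnear (x - lam • g x)) hy
    rw [sub_right_comm, inner_sub_left, real_inner_smul_left] at this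
    linarith
  have hnorm : ‖y - x‖ ^ 2 = ‖y - xp‖ ^ 2 - 2 * ⟪x - xp, y - xp⟫ + ‖xp - x‖ ^ 2 := by
    rw [← sub_sub_sub_cancel_right y x xp, norm_sub_sq_real, real_inner_comm, norm_sub_rev x xp]
  have hlamL_mul : lam * L ≤ 1 := (le_div_iff₀ hL).mp hlamL
  calc ‖y - xp‖ ^ 2 - ‖y - x‖ ^ 2
      ≤ 2 * lam * ⟪g x, y - xp⟫ - ‖xp - x‖ ^ 2 := by linarith
    _ = 2 * lam * (⟪g x, y - x⟫ - ⟪g x, xp - x⟫) - ‖xp - x‖ ^ 2 := by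
      rw [← inner_sub_right, sub_sub_sub_cancel_right]
    _ ≤ 2 * lam * (f y - f xp + L / 2 * ‖xp - x‖ ^ 2) - ‖xp - x‖ ^ 2 := by
      gcongr
      linarith
    _ ≤ 2 * lam * (f y - f xp) := by nlinarith [sq_nonneg ‖xp - x‖]

/-- The projected gradient step inequality for a convex function with
Lipschitz gradient, for stepsizes `0 < λ ≤ 1/L`. -/
theorem projected_gradient_step_inequality {n : ℕ}
    (X₀ : Set (EuclideanSpace ℝ (Fin n)))
    (hX₀ne : X₀.Nonempty) (hX₀cl : IsClosed X₀) (hX₀cv : Convex ℝ X₀)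
    (f : EuclideanSpace ℝ (Fin n) → ℝ) (hf : ConvexOn ℝ Set.univ f)
    (g : EuclideanSpace ℝ (Fin n) → EuclideanSpace ℝ (Fin n))
    (hgrad : ∀ z, HasGradientAt f (g z) z)
    (L : ℝ) (hL : 0 < L) (hLip : LipschitzWith (Real.toNNReal L) g)
    (lam : ℝ) (hlam : 0 < lam) (hlamL : lam ≤ 1 / L)
    -- `P` is the Euclidean projection onto `X₀`
    (P : EuclideanSpace ℝ (Fin n) → EuclideanSpace ℝ (Fin n))
    (hPmem : ∀ z, P z ∈ X₀) (hPnear : ∀ z, ∀ w ∈ X₀, ‖z - P z‖ ≤ ‖z - w‖)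
    (x : EuclideanSpace ℝ (Fin n)) (y : EuclideanSpace ℝ (Fin n)) (hy : y ∈ X₀) :
    2 * lam * (f y - f (P (x - lam • g x)))
      ≥ ‖y - P (x - lam • g x)‖ ^ 2 - ‖y - x‖ ^ 2 :=
  projected_gradient_step_inequality_general X₀ hX₀cv f hf g hgrad L hL hLip lam hlam hlamL P hPmem
    hPnear x y hy
end

section
/- (Equivalence of the Huberized and least-squares lower-level problems.) Let X₀ ⊆ ℝⁿ be nonempty, let R be a real m×n matrix with rows r₁ᵀ, …, r_mᵀ, let b ∈ ℝᵐ, and let x̃ ∈ X₀ be such that Δ := ‖Rx̃ − b‖ > 0. Define q(x) = (1/2)‖Rx − b‖², the Huber function h(t) = t² if |t| < Δ and h(t) = 2Δ|t| − Δ² otherwise, and f₀(x) = (1/2)Σ_{i=1}^m h(⟨r_i, x⟩ − b_i). Then the set of minimizers of f₀ over X₀ equals the set of minimizers of q over X₀: {x ∈ X₀ : f₀(x) ≤ f₀(y) for all y ∈ X₀} = {x ∈ X₀ : q(x) ≤ q(y) for all y ∈ X₀}. -/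
/-!
Each Huber term is at most the corresponding square, so `f₀ ≤ q`. Huber terms are nonnegative, and
one that is at most `Δ²` has argument `|t| ≤ Δ`, where it equals `t²`; hence `f₀ = q` on the
sublevel set `{f₀ ≤ Δ²/2}`. Since `q x̃ = Δ²/2`, the minimizers of either
function lie in this sublevel set, where the two functions coincide.
-/

theorem isMinOn_iff_isMinOn_of_le_of_eq {α β : Type*} [LinearOrder β] {f g : α → β} {S : Set α}
    {c : β} {x₀ x : α} (hle : ∀ x, f x ≤ g x) (heq : ∀ x, f x ≤ c → f x = g x) (hx₀ : x₀ ∈ S)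
    (hgx₀ : g x₀ ≤ c) : IsMinOn f S x ↔ IsMinOn g S x := by
  simp only [isMinOn_iff]
  constructor
  · intro hmin y hy
    have hfx : f x = g x := heq x ((hmin x₀ hx₀).trans ((hle x₀).trans hgx₀))
    calc g x = f x := hfx.symm
      _ ≤ f y := hmin y hy
      _ ≤ g y := hle y
  · intro hmin y hy
    have hgx : g x ≤ c := (hmin x₀ hx₀).trans hgx₀
    have hfx : f x = g x := heq x ((hle x).trans hgx)
    rcases le_or_gt (f y) c with hfy | hfy
    · rw [hfx, heq y hfy]
      exact hmin y hy
    · exact (hfx.trans_le hgx).trans hfy.le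

noncomputable def huber (Δ t : ℝ) : ℝ := if |t| < Δ then t ^ 2 else 2 * Δ * |t| - Δ ^ 2

namespace huber

variable {Δ t : ℝ}

theorem le_sq : huber Δ t ≤ t ^ 2 := by
  unfold huber
  split_ifs
  · exact le_rfl
  · nlinarith [sq_nonneg (|t| - Δ), sq_abs t]

theorem nonneg (hΔ : 0 ≤ Δ) : 0 ≤ huber Δ t := by
  unfold huber
  split_ifs with ht
  · positivity
  · nlinarith [not_lt.mp ht]

theorem eq_sq_of_le_sq (hΔ : 0 < Δ) (ht : huber Δ t ≤ Δ ^ 2) : huber Δ t = t ^ 2 := by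
  unfold huber at ht ⊢
  split_ifs at ht ⊢ with hlt
  · rfl
  · have habs : |t| = Δ := le_antisymm (by nlinarith) (not_lt.mp hlt)
    rw [habs, ← sq_abs t, habs]
    ring

theorem sum_le_sum_sq {ι : Type*} [Fintype ι] (r : ι → ℝ) :
    ∑ i, huber Δ (r i) ≤ ∑ i, r i ^ 2 :=
  Finset.sum_le_sum fun _ _ => le_sq

theorem sum_eq_sum_sq_of_sum_le {ι : Type*} [Fintype ι] (hΔ : 0 < Δ) {r : ι → ℝ}
    (hr : ∑ i, huber Δ (r i) ≤ Δ ^ 2) : ∑ i, huber Δ (r i) = ∑ i, r i ^ 2 :=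
  Finset.sum_congr rfl fun _ hi => eq_sq_of_le_sq hΔ <|
    (Finset.single_le_sum (fun j _ => nonneg (t := r j) hΔ.le) hi).trans hr

end huber

theorem norm_sq_toLp_mulVec_sub {m n : ℕ} (R : Matrix (Fin m) (Fin n) ℝ)
    (b : EuclideanSpace ℝ (Fin m)) (x : EuclideanSpace ℝ (Fin n)) :
    ‖(WithLp.equiv 2 (Fin m → ℝ)).symm (R.mulVec x) - b‖ ^ 2 = ∑ i, (R.mulVec x i - b i) ^ 2 := by
  simp [EuclideanSpace.norm_sq_eq]

theorem huber_least_squares_equivalence_general {m n : ℕ}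
    (X₀ : Set (EuclideanSpace ℝ (Fin n)))
    (R : Matrix (Fin m) (Fin n) ℝ) (b : EuclideanSpace ℝ (Fin m))
    (xt : EuclideanSpace ℝ (Fin n)) (hxt : xt ∈ X₀)
    (Δ : ℝ)
    (hΔ : Δ = ‖(WithLp.equiv 2 (Fin m → ℝ)).symm (R.mulVec xt) - b‖)
    (hΔpos : 0 < Δ)
    (q : EuclideanSpace ℝ (Fin n) → ℝ)
    (hq : ∀ x, q x = ‖(WithLp.equiv 2 (Fin m → ℝ)).symm (R.mulVec x) - b‖ ^ 2 / 2)
    (h : ℝ → ℝ)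
    (hh : ∀ t, h t = if |t| < Δ then t ^ 2 else 2 * Δ * |t| - Δ ^ 2)
    (f₀ : EuclideanSpace ℝ (Fin n) → ℝ)
    (hf₀ : ∀ x, f₀ x = (∑ i, h (R.mulVec x i - b i)) / 2) :
    {x ∈ X₀ | ∀ y ∈ X₀, f₀ x ≤ f₀ y} = {x ∈ X₀ | ∀ y ∈ X₀, q x ≤ q y} := by
  have hf₀' : ∀ x, f₀ x = (∑ i, huber Δ (R.mulVec x i - b i)) / 2 := fun x => by
    rw [hf₀, funext hh]
    rfl
  have hq' : ∀ x, q x = (∑ i, (R.mulVec x i - b i) ^ 2) / 2 := fun x => by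
    rw [hq, norm_sq_toLp_mulVec_sub]
  have hle : ∀ x, f₀ x ≤ q x := fun x => by
    rw [hf₀', hq']
    gcongr ?_ / 2
    exact huber.sum_le_sum_sq fun i => R.mulVec x i - b i
  have heq : ∀ x, f₀ x ≤ Δ ^ 2 / 2 → f₀ x = q x := fun x hx => by
    rw [hf₀'] at hx ⊢
    rw [hq', huber.sum_eq_sum_sq_of_sum_le hΔpos (by linarith)]
  have hqxt : q xt = Δ ^ 2 / 2 := by rw [hq, ← hΔ]
  ext x
  simp only [Set.mem_ofPred_eq, ← isMinOn_iff]
  exact and_congr_right fun _ => isMinOn_iff_isMinOn_of_le_of_eq hle heq hxt hqxt.le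

/-- Equivalence of the Huberized and least-squares lower-level problems:
the minimizers over `X₀` of the Huberized function `f₀` coincide with the
minimizers of the least-squares function `q`. -/
theorem huber_least_squares_equivalence {m n : ℕ}
    (X₀ : Set (EuclideanSpace ℝ (Fin n))) (hX₀ne : X₀.Nonempty)
    (R : Matrix (Fin m) (Fin n) ℝ) (b : EuclideanSpace ℝ (Fin m))
    (xt : EuclideanSpace ℝ (Fin n)) (hxt : xt ∈ X₀)
    (Δ : ℝ)
    (hΔ : Δ = ‖(WithLp.equiv 2 (Fin m → ℝ)).symm (R.mulVec xt) - b‖)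
    (hΔpos : 0 < Δ)
    (q : EuclideanSpace ℝ (Fin n) → ℝ)
    (hq : ∀ x, q x = ‖(WithLp.equiv 2 (Fin m → ℝ)).symm (R.mulVec x) - b‖ ^ 2 / 2)
    (h : ℝ → ℝ)
    (hh : ∀ t, h t = if |t| < Δ then t ^ 2 else 2 * Δ * |t| - Δ ^ 2)
    (f₀ : EuclideanSpace ℝ (Fin n) → ℝ)
    (hf₀ : ∀ x, f₀ x = (∑ i, h (R.mulVec x i - b i)) / 2) :
    {x ∈ X₀ | ∀ y ∈ X₀, f₀ x ≤ f₀ y} = {x ∈ X₀ | ∀ y ∈ X₀, q x ≤ q y} :=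
  huber_least_squares_equivalence_general X₀ R b xt hxt Δ hΔ hΔpos q hq h hh f₀ hf₀
end

section
/- (Asymptotic optimality of best-so-far values.) Let f : ℝⁿ → ℝ, let y ∈ ℝⁿ, let β > 0, let {x_k} be a sequence in ℝⁿ, let {λ_k} be positive reals with Σ_{k=0}^∞ λ_k = ∞, and let {s_k} be nonnegative reals with s_k/λ_k → 0, such that for all k: ‖x_{k+1} − y‖² ≤ ‖x_k − y‖² − βλ_k(f(x_k) − f(y)) + s_k. Then limsup_{n → ∞} (min_{0 ≤ k ≤ n} f(x_k)) ≤ f(y). -/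
/-!
Suppose `f (x k) ≥ r` for all `k`, for some `r > f y`. Once `s k / λ k < β (r - f y) / 2`, the recursion
makes `‖x k - y‖²` drop by at least `β (r - f y) λ k / 2` at every step; since it stays
nonnegative, the `λ k` would have bounded partial sums, contradicting divergence. So every
level above `f y` is undercut by some iterate, and from then on the best-so-far value stays below it.
-/

open Filter Topology

theorem add_mul_sum_Ico_le_of_descent {d lam : ℕ → ℝ} {c : ℝ} {K : ℕ}
    (hstep : ∀ k, K ≤ k → d (k + 1) + c * lam k ≤ d k) :
    ∀ N, K ≤ N → d N + c * ∑ k ∈ Finset.Ico K N, lam k ≤ d K := by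
  intro N hN
  induction N, hN using Nat.le_induction with
  | base => simp
  | succ N hKN ih =>
    rw [Finset.sum_Ico_succ_top hKN, mul_add]
    linarith [hstep N hKN]

theorem not_tendsto_sum_of_nonneg_descent {d lam : ℕ → ℝ} {c : ℝ} {K : ℕ}
    (hd : ∀ k, 0 ≤ d k) (hc : 0 < c) (hstep : ∀ k, K ≤ k → d (k + 1) + c * lam k ≤ d k) :
    ¬ Tendsto (fun N => ∑ k ∈ Finset.range (N + 1), lam k) atTop atTop := by
  intro hdiv
  set C := ∑ k ∈ Finset.range K, lam k + d K / c
  obtain ⟨N, hNC, hKN⟩ := ((hdiv.eventually_gt_atTop C).and (eventually_ge_atTop K)).exists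
  have htail : ∑ k ∈ Finset.Ico K (N + 1), lam k ≤ d K / c := by
    rw [le_div_iff₀ hc, mul_comm]
    linarith [add_mul_sum_Ico_le_of_descent hstep (N + 1) (by omega), hd (N + 1)]
  rw [← Finset.sum_range_add_sum_Ico _ (by omega : K ≤ N + 1)] at hNC
  linarith

theorem exists_lt_of_descent {d g lam s : ℕ → ℝ} {β m r : ℝ} (hβ : 0 < β)
    (hd : ∀ k, 0 ≤ d k) (hlam : ∀ k, 0 < lam k)
    (hdiv : Tendsto (fun N => ∑ k ∈ Finset.range (N + 1), lam k) atTop atTop)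
    (hsl : Tendsto (fun k => s k / lam k) atTop (𝓝 0))
    (hrec : ∀ k, d (k + 1) ≤ d k - β * lam k * (g k - m) + s k) (hr : m < r) :
    ∃ k, g k < r := by
  by_contra! hgr
  set c := β * (r - m) / 2 with hc_def
  have hc : 0 < c := by have := sub_pos.2 hr; positivity
  obtain ⟨K, hK⟩ := (hsl.eventually (gt_mem_nhds hc)).exists_forall_of_atTop
  refine not_tendsto_sum_of_nonneg_descent hd hc (K := K) (fun k hk => ?_) hdiv
  have hs : s k < c * lam k := (div_lt_iff₀ (hlam k)).1 (hK k hk)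
  have hgain : β * lam k * (r - m) ≤ β * lam k * (g k - m) :=
    mul_le_mul_of_nonneg_left (by linarith [hgr k]) (mul_pos hβ (hlam k)).le
  have hhalf : 2 * (c * lam k) = β * lam k * (r - m) := by rw [hc_def]; ring
  linarith [hrec k]

theorem limsup_inf'_range_le {g : ℕ → ℝ} {m : ℝ} (h : ∀ r, m < r → ∃ k, g k < r) :
    limsup (fun N => (Finset.range (N + 1)).inf'
      (Finset.nonempty_range_iff.mpr (Nat.succ_ne_zero N)) (fun k => (g k : EReal))) atTop
      ≤ m := by
  refine EReal.le_of_forall_lt_iff_le.1 fun r hr => ?_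
  obtain ⟨k, hk⟩ := h r (EReal.coe_lt_coe_iff.1 hr)
  calc _ ≤ (g k : EReal) := limsup_le_of_le (by isBoundedDefault) <|
          eventually_ge_atTop k |>.mono fun N hN =>
            Finset.inf'_le _ (Finset.mem_range.2 (Nat.lt_succ_of_le hN))
    _ ≤ r := EReal.coe_le_coe_iff.2 hk.le

theorem best_so_far_asymptotic_optimality_general {n : ℕ}
    (f : EuclideanSpace ℝ (Fin n) → ℝ) (y : EuclideanSpace ℝ (Fin n))
    (β : ℝ) (hβ : 0 < β)
    (x : ℕ → EuclideanSpace ℝ (Fin n)) (lam s : ℕ → ℝ)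
    (hlam : ∀ k, 0 < lam k)
    (hdiv : Tendsto (fun N => ∑ k ∈ Finset.range (N + 1), lam k) atTop atTop)
    (hsl : Tendsto (fun k => s k / lam k) atTop (𝓝 0))
    (hrec : ∀ k, ‖x (k + 1) - y‖ ^ 2
        ≤ ‖x k - y‖ ^ 2 - β * lam k * (f (x k) - f y) + s k) :
    Filter.limsup
        (fun N => ((Finset.range (N + 1)).inf'
          (Finset.nonempty_range_iff.mpr (Nat.succ_ne_zero N))
          (fun k => f (x k)) : EReal)) atTop
      ≤ (f y : EReal) :=
  limsup_inf'_range_le fun _ hr =>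
    exists_lt_of_descent hβ (fun k => sq_nonneg ‖x k - y‖) hlam hdiv hsl hrec hr

/-- Asymptotic optimality of best-so-far values: under the per-iteration
descent inequality with divergent stepsizes and relatively vanishing errors,
the best function value seen so far is asymptotically at most `f y`. -/
theorem best_so_far_asymptotic_optimality {n : ℕ}
    (f : EuclideanSpace ℝ (Fin n) → ℝ) (y : EuclideanSpace ℝ (Fin n))
    (β : ℝ) (hβ : 0 < β)
    (x : ℕ → EuclideanSpace ℝ (Fin n)) (lam s : ℕ → ℝ)
    (hlam : ∀ k, 0 < lam k) (hs : ∀ k, 0 ≤ s k)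
    (hdiv : Tendsto (fun N => ∑ k ∈ Finset.range (N + 1), lam k) atTop atTop)
    (hsl : Tendsto (fun k => s k / lam k) atTop (𝓝 0))
    (hrec : ∀ k, ‖x (k + 1) - y‖ ^ 2
        ≤ ‖x k - y‖ ^ 2 - β * lam k * (f (x k) - f y) + s k) :
    Filter.limsup
        (fun N => ((Finset.range (N + 1)).inf'
          (Finset.nonempty_range_iff.mpr (Nat.succ_ne_zero N))
          (fun k => f (x k)) : EReal)) atTop
      ≤ (f y : EReal) :=
  best_so_far_asymptotic_optimality_general f y β hβ x lam s hlam hdiv hsl hrec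
end
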